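/- arXiv:2104.06716 — 4 statements merged into one kernel-verified Lean document; each statement's English description precedes it below -/
import Mathlib

section
/- Let α be irrational with inf_{q≥1} q^c ‖qα‖ > 0 for some 1 ≤ c < 2. Then the series ∑_{m=1}^∞ 1/(m² ‖mα‖) converges. -/
/-!
Cut ℕ into the dyadic blocks `[2^k, 2^(k+1))`. For `1 ≤ q ≤ N` the hypothesis gives `‖qα‖ ≥ K / N^c`, and
if `pα` and `qα` lie on the same side of their nearest integers, then
`|‖qα‖ - ‖pα‖| ≥ ‖(q - p)α‖ ≥ K / N^c`. So on each of the two sides the values `‖qα‖` are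
`K / N^c`-separated and at least `K / N^c`, and their reciprocals sum to at most `N^c H_N / K`.
On the `k`-th block this bounds `∑ 1 / (q² ‖qα‖)` by `O((k + 1) (2^c / 4)^k)`, which is summable
since `c < 2`.
-/

/-- Distance from `x` to the nearest integer. -/
noncomputable def nint (x : ℝ) : ℝ := |x - (round x : ℝ)|

open Finset

lemma nint_nonneg (x : ℝ) : 0 ≤ nint x := abs_nonneg _

lemma nint_sub_le_abs_sub_nint {x y : ℝ} (hsign : 0 ≤ x - round x ↔ 0 ≤ y - round y) :
    nint (x - y) ≤ |nint x - nint y| := by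
  have hround : nint (x - y) ≤ |(x - round x) - (y - round y)| := by
    have := round_le (x - y) (round x - round y)
    push_cast at this
    exact this.trans_eq (by ring_nf)
  refine hround.trans_eq ?_
  unfold nint
  by_cases hx : 0 ≤ x - round x
  · rw [abs_of_nonneg hx, abs_of_nonneg (hsign.1 hx)]
  · have hy := mt hsign.2 hx
    push Not at hx hy
    rw [abs_of_neg hx, abs_of_neg hy, ← abs_neg]
    ring_nf

lemma sum_one_div_le_of_separated {ι : Type*} (f : ι → ℝ) {a δ : ℝ} (ha : 0 < a) (hδ : 0 < δ)
    (S : Finset ι) (hlow : ∀ q ∈ S, a ≤ f q)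
    (hsep : (S : Set ι).Pairwise fun p q => δ ≤ |f p - f q|) :
    ∑ q ∈ S, 1 / f q ≤ ∑ i ∈ range #S, 1 / (a + i * δ) := by
  classical
  induction hS : #S generalizing S a with
  | zero => simp_all
  | succ m ih =>
    obtain ⟨q₀, hq₀, hmin⟩ := S.exists_min_image f (card_pos.1 (by omega))
    have hlow' : ∀ q ∈ S.erase q₀, a + δ ≤ f q := fun q hq => by
      have hgap : δ ≤ |f q - f q₀| := hsep (mem_of_mem_erase hq) hq₀ (ne_of_mem_erase hq)
      rw [abs_of_nonneg (sub_nonneg.2 (hmin q (mem_of_mem_erase hq)))] at hgap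
      linarith [hlow q₀ hq₀]
    have hrest := ih (by linarith) (S.erase q₀) hlow' (hsep.mono (by simp))
      (by rw [card_erase_of_mem hq₀, hS]; rfl)
    rw [← sum_erase_add S _ hq₀, sum_range_succ']
    refine add_le_add ?_ ?_
    · exact hrest.trans_eq (sum_congr rfl fun i _ => by push_cast; ring_nf)
    · simpa using one_div_le_one_div_of_le ha (hlow q₀ hq₀)

lemma harmonic_mono : Monotone harmonic := fun _ _ h =>
  sum_le_sum_of_subset_of_nonneg (range_subset_range.2 h) fun _ _ _ => by positivity

lemma sum_one_div_le_harmonic_div {ι : Type*} (f : ι → ℝ) {a : ℝ} (ha : 0 < a) (S : Finset ι)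
    (hlow : ∀ q ∈ S, a ≤ f q) (hsep : (S : Set ι).Pairwise fun p q => a ≤ |f p - f q|) :
    ∑ q ∈ S, 1 / f q ≤ harmonic #S / a := by
  refine (sum_one_div_le_of_separated f ha ha S hlow hsep).trans_eq ?_
  simp only [harmonic, Rat.cast_sum, sum_div]
  refine sum_congr rfl fun i _ => ?_
  push_cast
  field_simp
  ring

lemma summable_of_sum_Ico_two_pow_le {f g : ℕ → ℝ} (hf : ∀ n, 0 ≤ f n) (hg : Summable g)
    (hblock : ∀ k, ∑ n ∈ Ico (2 ^ k : ℕ) (2 ^ (k + 1)), f n ≤ g k) : Summable f := by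
  have hpow : ∀ N, ∑ n ∈ range (2 ^ N), f n ≤ f 0 + ∑ k ∈ range N, g k := by
    intro N
    induction N with
    | zero => simp
    | succ N ih =>
      rw [← sum_range_add_sum_Ico _ (Nat.pow_le_pow_right two_pos N.le_succ), sum_range_succ]
      linarith [hblock N]
  have hg0 : ∀ k, 0 ≤ g k := fun k => (sum_nonneg fun n _ => hf n).trans (hblock k)
  refine summable_of_sum_range_le hf (c := f 0 + ∑' k, g k) fun N => ?_
  calc ∑ n ∈ range N, f n ≤ ∑ n ∈ range (2 ^ N), f n :=
        sum_le_sum_of_subset_of_nonneg (range_subset_range.2 N.lt_two_pow_self.le)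
          fun n _ _ => hf n
    _ ≤ f 0 + ∑' k, g k := (hpow N).trans (by gcongr; exact hg.sum_le_tsum _ fun k _ => hg0 k)

section Diophantine

variable {α c K : ℝ}

lemma div_rpow_le_nint (hc : 0 ≤ c) (hK : ∀ q : ℕ, 1 ≤ q → K ≤ (q : ℝ) ^ c * nint (q * α))
    {q N : ℕ} (hq : 1 ≤ q) (hqN : q ≤ N) : K / (N : ℝ) ^ c ≤ nint (q * α) := by
  have hN : (0 : ℝ) < (N : ℝ) ^ c := by
    have : (0 : ℝ) < N := by exact_mod_cast hq.trans hqN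
    positivity
  rw [div_le_iff₀ hN]
  calc K ≤ (q : ℝ) ^ c * nint (q * α) := hK q hq
    _ ≤ (N : ℝ) ^ c * nint (q * α) := by gcongr; exact nint_nonneg _
    _ = nint (q * α) * (N : ℝ) ^ c := mul_comm _ _

lemma div_rpow_le_abs_sub_nint (hc : 0 ≤ c)
    (hK : ∀ q : ℕ, 1 ≤ q → K ≤ (q : ℝ) ^ c * nint (q * α)) {p q N : ℕ} (hpq : p < q) (hqN : q ≤ N)
    (hsign : 0 ≤ q * α - round (q * α) ↔ 0 ≤ p * α - round (p * α)) :
    K / (N : ℝ) ^ c ≤ |nint (q * α) - nint (p * α)| := by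
  have hdiff := div_rpow_le_nint hc hK (q := q - p) (N := N) (by omega) (by omega)
  rw [Nat.cast_sub hpq.le, sub_mul] at hdiff
  exact hdiff.trans (nint_sub_le_abs_sub_nint hsign)

lemma sum_one_div_nint_le (hc : 0 ≤ c) (hK0 : 0 < K)
    (hK : ∀ q : ℕ, 1 ≤ q → K ≤ (q : ℝ) ^ c * nint (q * α)) {N : ℕ} (hN : 0 < N) {S : Finset ℕ}
    (hS : S ⊆ Icc 1 N) :
    ∑ q ∈ S, 1 / nint (q * α) ≤ 2 * (N : ℝ) ^ c * harmonic #S / K := by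
  set a := K / (N : ℝ) ^ c
  have ha : 0 < a := by positivity
  have hlow : ∀ q ∈ S, a ≤ nint (q * α) := fun q hq =>
    have hq' := mem_Icc.1 (hS hq)
    div_rpow_le_nint hc hK hq'.1 hq'.2
  let above : ℕ → Prop := fun q => 0 ≤ q * α - round (q * α)
  have hclass : ∀ T ⊆ S, (∀ p ∈ T, ∀ q ∈ T, (above q ↔ above p)) →
      ∑ q ∈ T, 1 / nint (q * α) ≤ harmonic #S / a := by
    intro T hT hsign
    refine (sum_one_div_le_harmonic_div _ ha T (fun q hq => hlow q (hT hq)) ?_).trans ?_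
    · intro p hp q hq hpq
      rcases lt_or_gt_of_ne hpq with hlt | hlt
      · rw [abs_sub_comm]
        exact div_rpow_le_abs_sub_nint hc hK hlt (mem_Icc.1 (hS (hT hq))).2 (hsign p hp q hq)
      · exact div_rpow_le_abs_sub_nint hc hK hlt (mem_Icc.1 (hS (hT hp))).2 (hsign q hq p hp)
    · gcongr
      exact_mod_cast harmonic_mono (card_le_card hT)
  rw [← sum_filter_add_sum_filter_not S above]
  calc _ ≤ harmonic #S / a + harmonic #S / a := by
        gcongr <;> refine hclass _ (filter_subset _ _) fun p hp q hq => ?_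
        · exact iff_of_true (mem_filter.1 hq).2 (mem_filter.1 hp).2
        · exact iff_of_false (mem_filter.1 hq).2 (mem_filter.1 hp).2
    _ = 2 * (N : ℝ) ^ c * harmonic #S / K := by
        simp only [a]
        field_simp
        ring

lemma sum_Ico_two_pow_le (hc : 0 ≤ c) (hK0 : 0 < K)
    (hK : ∀ q : ℕ, 1 ≤ q → K ≤ (q : ℝ) ^ c * nint (q * α)) (k : ℕ) :
    ∑ q ∈ Ico (2 ^ k : ℕ) (2 ^ (k + 1)), 1 / ((q : ℝ) ^ 2 * nint (q * α))
      ≤ 2 * 2 ^ c / K * ((k : ℝ) + 1) * (2 ^ c / 4) ^ k := by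
  have hsub : Ico (2 ^ k : ℕ) (2 ^ (k + 1)) ⊆ Icc 1 (2 ^ (k + 1)) := fun q hq => by
    have := mem_Ico.1 hq
    exact mem_Icc.2 ⟨Nat.one_le_two_pow.trans this.1, this.2.le⟩
  have hcard : #(Ico (2 ^ k : ℕ) (2 ^ (k + 1))) = 2 ^ k := by
    rw [Nat.card_Ico, pow_succ]; omega
  have hharm : (harmonic #(Ico (2 ^ k : ℕ) (2 ^ (k + 1))) : ℝ) ≤ k + 1 := by
    rw [hcard]
    refine (harmonic_le_one_add_log _).trans ?_
    push_cast
    rw [Real.log_pow]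
    nlinarith [Real.log_two_lt_d9, Real.log_pos one_lt_two, (k.cast_nonneg : (0 : ℝ) ≤ k)]
  have hterm : ∀ q ∈ Ico (2 ^ k : ℕ) (2 ^ (k + 1)),
      1 / ((q : ℝ) ^ 2 * nint (q * α)) ≤ 1 / 4 ^ k * (1 / nint (q * α)) := by
    intro q hq
    rw [one_div_mul_one_div]
    have h4 : (4 : ℝ) ^ k ≤ (q : ℝ) ^ 2 := by
      have : (2 : ℝ) ^ k ≤ q := by exact_mod_cast (mem_Ico.1 hq).1
      calc (4 : ℝ) ^ k = ((2 : ℝ) ^ k) ^ 2 := by rw [← pow_mul, mul_comm, pow_mul]; norm_num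
        _ ≤ (q : ℝ) ^ 2 := by gcongr
    have hpos := (div_rpow_le_nint hc hK (q := q) (N := 2 ^ (k + 1))
      (mem_Icc.1 (hsub hq)).1 (mem_Icc.1 (hsub hq)).2)
    have : 0 < nint (q * α) := lt_of_lt_of_le (by positivity) hpos
    gcongr
  calc _ ≤ ∑ q ∈ Ico (2 ^ k : ℕ) (2 ^ (k + 1)), 1 / 4 ^ k * (1 / nint (q * α)) := sum_le_sum hterm
    _ = 1 / 4 ^ k * ∑ q ∈ Ico (2 ^ k : ℕ) (2 ^ (k + 1)), 1 / nint (q * α) := (mul_sum ..).symm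
    _ ≤ 1 / 4 ^ k *
          (2 * ((2 ^ (k + 1) : ℕ) : ℝ) ^ c * harmonic #(Ico (2 ^ k : ℕ) (2 ^ (k + 1))) / K) := by
        gcongr
        exact sum_one_div_nint_le hc hK0 hK (by positivity) hsub
    _ ≤ 1 / 4 ^ k * (2 * ((2 ^ (k + 1) : ℕ) : ℝ) ^ c * (k + 1) / K) := by gcongr
    _ = 2 * 2 ^ c / K * ((k : ℝ) + 1) * (2 ^ c / 4) ^ k := by
        rw [Nat.cast_pow, Nat.cast_two, ← Real.rpow_pow_comm zero_le_two, pow_succ, div_pow]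
        field_simp

end Diophantine

theorem stmt4_general (α : ℝ) (c : ℝ) (hc1 : 1 ≤ c) (hc2 : c < 2)
    (h : ∃ K > 0, ∀ q : ℕ, 1 ≤ q → K ≤ (q : ℝ) ^ c * nint (q * α)) :
    Summable (fun m : ℕ => 1 / (((m : ℝ) + 1) ^ 2 * nint (((m : ℝ) + 1) * α))) := by
  obtain ⟨K, hK0, hK⟩ := h
  have hr : ‖(2 : ℝ) ^ c / 4‖ < 1 := by
    rw [Real.norm_of_nonneg (by positivity), div_lt_one four_pos]
    calc (2 : ℝ) ^ c < 2 ^ (2 : ℝ) := Real.rpow_lt_rpow_of_exponent_lt one_lt_two hc2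
      _ = 4 := by norm_num
  have hgeom : Summable fun k : ℕ => ((k : ℝ) + 1) * (2 ^ c / 4) ^ k := by
    simpa [add_mul] using
      (summable_pow_mul_geometric_of_norm_lt_one 1 hr).add (summable_geometric_of_norm_lt_one hr)
  have hT := summable_of_sum_Ico_two_pow_le
    (fun q => by have := nint_nonneg (q * α); positivity)
    (by simpa [mul_assoc] using hgeom.mul_left (2 * 2 ^ c / K))
    (sum_Ico_two_pow_le (by linarith) hK0 hK)
  simpa using (summable_nat_add_iff 1).2 hT

theorem stmt4 (α : ℝ) (hα : Irrational α) (c : ℝ) (hc1 : 1 ≤ c) (hc2 : c < 2)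
    (h : ∃ K > 0, ∀ q : ℕ, 1 ≤ q → K ≤ (q : ℝ) ^ c * nint (q * α)) :
    Summable (fun m : ℕ => 1 / (((m : ℝ) + 1) ^ 2 * nint (((m : ℝ) + 1) * α))) :=
  stmt4_general α c hc1 hc2 h
end

section
/- For every irrational α and every integer N ≥ 0, log P_N(α) = ∑_{m=1}^∞ (1/(2m)) (1 - sin(π(2N+1)mα)/sin(πmα)), where P_N(α) = ∏_{n=1}^N |2 sin(πnα)| (with P_0(α) = 1). -/
/-!
For `x ∉ ℤ`, `log |2 sin (π x)| = -∑_{m ≥ 1} cos (2π m x) / m`: this is the real part of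
`-log (1 - z) = ∑ z^m / m` at `z = e^{2π i x}`, a series on the unit circle that converges by
Dirichlet's test (its partial sums `∑ z^m` are bounded) and whose sum is identified by Abel's
limit theorem. Irrationality of `α` puts every `nα` off `ℤ`, so summing this expansion over
`x = nα`, `1 ≤ n ≤ N`, and exchanging the finite sum with the series leaves, for each `m`, a
cosine sum that the Dirichlet kernel `1 + 2 ∑_{n=1}^N cos (2 n y) = sin ((2N+1) y) / sin y`
evaluates.
-/

open Finset Filter Topology

theorem Real.sin_two_mul_add_one_mul (y : ℝ) (N : ℕ) :
    Real.sin ((2 * N + 1) * y) =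
      Real.sin y * (1 + 2 * ∑ n ∈ range N, Real.cos (2 * (n + 1) * y)) := by
  induction N with
  | zero => simp
  | succ N ih =>
    have hstep := Real.sin_sub_sin ((2 * (N + 1) + 1) * y) ((2 * N + 1) * y)
    rw [show ((2 * (N + 1) + 1) * y - (2 * N + 1) * y) / 2 = y by ring,
      show ((2 * (N + 1) + 1) * y + (2 * N + 1) * y) / 2 = 2 * (N + 1) * y by ring] at hstep
    push_cast [sum_range_succ]
    linear_combination hstep + ih

theorem Real.one_sub_sin_two_mul_add_one_mul_div_sin {y : ℝ} (hy : Real.sin y ≠ 0) (N : ℕ) :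
    (1 - Real.sin ((2 * N + 1) * y) / Real.sin y) / 2 =
      -∑ n ∈ range N, Real.cos (2 * (n + 1) * y) := by
  rw [Real.sin_two_mul_add_one_mul, mul_div_cancel_left₀ _ hy]
  ring

theorem Irrational.sin_pi_mul_ne_zero {x : ℝ} (hx : Irrational x) :
    Real.sin (Real.pi * x) ≠ 0 := by
  rw [Ne, Real.sin_eq_zero_iff]
  rintro ⟨j, hj⟩
  exact hx.ne_int j (mul_left_cancel₀ Real.pi_ne_zero (by linarith)).symm

namespace Complex

theorem norm_geom_sum_le {z : ℂ} (hz : ‖z‖ ≤ 1) (h1 : z ≠ 1) (n : ℕ) :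
    ‖∑ i ∈ range n, z ^ i‖ ≤ 2 / ‖1 - z‖ := by
  rw [geom_sum_eq h1, norm_div, ← norm_neg (z - 1), neg_sub]
  gcongr
  calc ‖z ^ n - 1‖ ≤ ‖z‖ ^ n + ‖(1 : ℂ)‖ := by simpa using norm_sub_le (z ^ n) 1
    _ ≤ 2 := by linarith [pow_le_one₀ (norm_nonneg z) hz (n := n), norm_one (α := ℂ)]

theorem cauchySeq_sum_range_pow_succ_div {z : ℂ} (hz : ‖z‖ ≤ 1) (h1 : z ≠ 1) :
    CauchySeq fun M : ℕ => ∑ m ∈ range M, z ^ (m + 1) / (m + 1 : ℕ) := by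
  have hanti : Antitone fun m : ℕ => ((m : ℝ) + 1)⁻¹ := fun _ _ hab => by
    dsimp only
    gcongr
  have hzero : Tendsto (fun m : ℕ => ((m : ℝ) + 1)⁻¹) atTop (𝓝 0) := by
    simpa only [one_div] using tendsto_one_div_add_atTop_nhds_zero_nat (𝕜 := ℝ)
  have hbdd (n : ℕ) : ‖∑ i ∈ range n, z ^ (i + 1)‖ ≤ 2 / ‖1 - z‖ := by
    simp_rw [pow_succ', ← mul_sum, norm_mul]
    exact (mul_le_of_le_one_left (norm_nonneg _) hz).trans (norm_geom_sum_le hz h1 n)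
  convert hanti.cauchySeq_series_mul_of_tendsto_zero_of_bounded hzero hbdd using 3 with M m
  rw [real_smul, div_eq_inv_mul]
  push_cast
  rfl

theorem one_sub_mem_slitPlane {z : ℂ} (hz : ‖z‖ ≤ 1) (h1 : z ≠ 1) :
    1 - z ∈ slitPlane := by
  rw [mem_slitPlane_iff, sub_re, one_re, sub_im, one_im, zero_sub, neg_ne_zero, sub_pos]
  by_cases him : z.im = 0
  · refine .inl (lt_of_le_of_ne ((le_abs_self _).trans ((abs_re_le_norm z).trans hz)) ?_)
    exact fun hre => h1 (Complex.ext hre him)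
  · exact .inr him

theorem tendsto_sum_range_pow_succ_div {z : ℂ} (hz : ‖z‖ ≤ 1) (h1 : z ≠ 1) :
    Tendsto (fun M : ℕ => ∑ m ∈ range M, z ^ (m + 1) / (m + 1 : ℕ)) atTop
      (𝓝 (-log (1 - z))) := by
  obtain ⟨l, hl⟩ := cauchySeq_tendsto_of_complete (cauchySeq_sum_range_pow_succ_div hz h1)
  suffices l = -log (1 - z) from this ▸ hl
  have hpartial : Tendsto (fun M => ∑ m ∈ range M, z ^ m / m) atTop (𝓝 l) := by
    rw [← tendsto_add_atTop_iff_nat 1]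
    simpa [sum_range_succ'] using hl
  have hlog : Tendsto (fun x : ℝ => -log (1 - x * z)) (𝓝[<] 1) (𝓝 (-log (1 - z))) := by
    have hslit := one_sub_mem_slitPlane hz h1
    have : ContinuousAt (fun x : ℝ => -log (1 - x * z)) 1 := by
      fun_prop (disch := simpa)
    simpa using this.tendsto.mono_left nhdsWithin_le_nhds
  refine tendsto_nhds_unique
    (tendsto_map'_iff.mp (tendsto_tsum_powerSeries_nhdsWithin_lt hpartial)) (hlog.congr' ?_)
  filter_upwards [Ioo_mem_nhdsLT zero_lt_one] with x hx
  have hxz : ‖(x : ℂ) * z‖ < 1 := by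
    rw [norm_mul, norm_real, Real.norm_of_nonneg hx.1.le]
    exact (mul_le_of_le_one_right hx.1.le hz).trans_lt hx.2
  simp only [Function.comp_apply, ← (hasSum_taylorSeries_neg_log hxz).tsum_eq, mul_pow]
  exact tsum_congr fun n => by ring

end Complex

theorem Real.tendsto_sum_range_cos_div {x : ℝ} (hx : Real.sin x ≠ 0) :
    Tendsto (fun M : ℕ => ∑ m ∈ range M, Real.cos (2 * (m + 1) * x) / (m + 1)) atTop
      (𝓝 (-Real.log |2 * Real.sin x|)) := by
  set z := Complex.exp (Complex.I * (2 * x : ℝ))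
  have hnorm : ‖z‖ = 1 := Complex.norm_exp_I_mul_ofReal _
  have hdist : ‖1 - z‖ = |2 * Real.sin x| := by
    rw [norm_sub_rev, Complex.norm_exp_I_mul_ofReal_sub_one, mul_div_cancel_left₀ _ two_ne_zero,
      Real.norm_eq_abs]
  have h1 : z ≠ 1 := fun h => by simp [h, hx] at hdist
  have hre (m : ℕ) : (z ^ (m + 1) / (m + 1 : ℕ)).re = Real.cos (2 * (m + 1) * x) / (m + 1) := by
    rw [Complex.div_natCast_re, ← Complex.exp_nat_mul, ← Complex.exp_ofReal_mul_I_re]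
    push_cast
    congr 3
    ring
  have := (Complex.continuous_re.tendsto _).comp
    (Complex.tendsto_sum_range_pow_succ_div hnorm.le h1)
  rw [Complex.neg_re, Complex.log_re, hdist] at this
  simpa only [Function.comp_def, Complex.re_sum, hre] using this

theorem stmt5 (α : ℝ) (hα : Irrational α) (N : ℕ) :
    Filter.Tendsto (fun M : ℕ => ∑ m ∈ Finset.range M,
        (1 / (2 * ((m : ℝ) + 1))) *
          (1 - Real.sin (Real.pi * (2 * (N : ℝ) + 1) * ((m : ℝ) + 1) * α) /
                Real.sin (Real.pi * ((m : ℝ) + 1) * α)))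
      Filter.atTop
      (nhds (Real.log (∏ n ∈ Finset.range N, |2 * Real.sin (Real.pi * ((n : ℝ) + 1) * α)|))) := by
  have hsin (k : ℕ) : Real.sin (Real.pi * ((k : ℝ) + 1) * α) ≠ 0 := by
    simpa [mul_assoc] using (hα.natCast_mul k.succ_ne_zero).sin_pi_mul_ne_zero
  rw [Real.log_prod fun n _ => by simpa using hsin n]
  have hlim := tendsto_finsetSum (range N) fun n _ =>
    (Real.tendsto_sum_range_cos_div (hsin n)).neg
  simp only [neg_neg] at hlim
  refine hlim.congr fun M => ?_
  simp only [← sum_neg_distrib]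
  rw [sum_comm]
  refine sum_congr rfl fun m _ => ?_
  rw [show Real.pi * (2 * (N : ℝ) + 1) * ((m : ℝ) + 1) * α
      = (2 * N + 1) * (Real.pi * ((m : ℝ) + 1) * α) by ring,
    one_div_mul_eq_div, div_mul_eq_div_div,
    Real.one_sub_sin_two_mul_add_one_mul_div_sin (hsin m), neg_div, Finset.sum_div,
    ← sum_neg_distrib]
  refine sum_congr rfl fun n _ => ?_
  congr 3
  ring
end

section
/- Let α be a badly approximable irrational, i.e. inf_{q≥1} q‖qα‖ > 0. Then there exist constants 0 < c₁ ≤ c₂ (depending on α) such that for all M ≥ 2, c₁ log M ≤ ∑_{m=1}^M 1/(m² ‖mα‖²) ≤ c₂ log M. -/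
open Finset

def BadlyApproximableWith (K α : ℝ) : Prop :=
  ∀ q : ℕ, 1 ≤ q → K ≤ (q : ℝ) * nint (q * α)

noncomputable def invSqApprox (α : ℝ) (m : ℕ) : ℝ := 1 / ((m : ℝ) ^ 2 * nint (m * α) ^ 2)

lemma invSqApprox_nonneg (α : ℝ) (m : ℕ) : 0 ≤ invSqApprox α m := by
  unfold invSqApprox
  positivity

lemma nint_sub_le (x y : ℝ) : nint (x - y) ≤ |(x - round x) - (y - round y)| := by
  have h := round_le (x - y) (round x - round y)
  push_cast at h
  exact h.trans_eq (by ring_nf)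

lemma abs_two_mul_floor_add_one_mul_le {x δ : ℝ} (hδ : 0 < δ) (hx : δ ≤ 2 * |x|) :
    |2 * (⌊x / δ⌋ : ℝ) + 1| * δ ≤ 4 * |x| := by
  set k := ⌊x / δ⌋
  have hlo : (k : ℝ) * δ ≤ x := (le_div_iff₀ hδ).1 (Int.floor_le _)
  have hhi : x < (k + 1) * δ := (div_lt_iff₀ hδ).1 (Int.lt_floor_add_one _)
  rcases le_or_gt 0 k with hk | hk
  · have hk' : (0 : ℝ) ≤ k := by exact_mod_cast hk
    have hx0 : 0 ≤ x := le_trans (by positivity) hlo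
    rw [abs_of_nonneg (by positivity), abs_of_nonneg hx0] at *
    linarith
  · have hk' : (k : ℝ) + 1 ≤ 0 := by exact_mod_cast hk
    have hx0 : x < 0 := hhi.trans_le (mul_nonpos_of_nonpos_of_nonneg hk' hδ.le)
    rw [abs_of_neg (by linarith), abs_of_neg hx0] at *
    linarith

theorem sum_one_div_sq_le_of_separated {ι : Type*} (s : Finset ι) (x : ι → ℝ) {δ : ℝ}
    (hδ : 0 < δ) (hsep : ∀ i ∈ s, ∀ j ∈ s, i ≠ j → δ ≤ |x i - x j|)
    (hfar : ∀ i ∈ s, δ ≤ 2 * |x i|) :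
    ∑ i ∈ s, 1 / x i ^ 2 ≤ 16 * (∑' n : ℤ, 1 / (n : ℝ) ^ 2) / δ ^ 2 := by
  set k : ι → ℤ := fun i => 2 * ⌊x i / δ⌋ + 1
  have hinj : Set.InjOn k s := by
    intro i hi j hj hij
    by_contra hne
    have hfloor : ⌊x i / δ⌋ = ⌊x j / δ⌋ := by simp only [k] at hij; omega
    have h := Int.abs_sub_lt_one_of_floor_eq_floor hfloor
    rw [← sub_div, abs_div, abs_of_pos hδ, div_lt_one hδ] at h
    exact (hsep i hi j hj hne).not_gt h
  have hpt : ∀ i ∈ s, 1 / x i ^ 2 ≤ 16 / δ ^ 2 * (1 / (k i : ℝ) ^ 2) := by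
    intro i hi
    have h := abs_two_mul_floor_add_one_mul_le hδ (hfar i hi)
    have hk : (k i : ℝ) ≠ 0 := Int.cast_ne_zero.2 (by simp only [k]; omega)
    have hx : x i ≠ 0 := abs_pos.1 (by linarith [hfar i hi])
    rw [mul_one_div, div_div, div_le_div_iff₀ (by positivity) (by positivity)]
    have h2 := pow_le_pow_left₀ (by positivity) h 2
    push_cast [k] at h2 ⊢
    rw [mul_pow, mul_pow, sq_abs, sq_abs] at h2
    nlinarith
  calc ∑ i ∈ s, 1 / x i ^ 2 ≤ ∑ i ∈ s, 16 / δ ^ 2 * (1 / (k i : ℝ) ^ 2) := sum_le_sum hpt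
    _ = 16 / δ ^ 2 * ∑ n ∈ s.image k, 1 / (n : ℝ) ^ 2 := by rw [sum_image hinj, mul_sum]
    _ ≤ 16 / δ ^ 2 * ∑' n : ℤ, 1 / (n : ℝ) ^ 2 := by
      gcongr
      exact (Real.summable_one_div_int_pow.2 one_lt_two).sum_le_tsum _ fun _ _ => by positivity
    _ = _ := by ring

theorem sum_Ico_one_two_pow_le {f : ℕ → ℝ} {B : ℝ}
    (hB : ∀ j, ∑ m ∈ Ico (2 ^ j) (2 ^ (j + 1)), f m ≤ B) (L : ℕ) :
    ∑ m ∈ Ico 1 (2 ^ L), f m ≤ L * B := by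
  induction L with
  | zero => simp
  | succ L ih =>
    rw [← sum_Ico_consecutive f Nat.one_le_two_pow (Nat.pow_le_pow_right two_pos L.le_succ)]
    push_cast
    linarith [hB L]

namespace BadlyApproximableWith

variable {K α : ℝ}

theorem div_le_nint (hb : BadlyApproximableWith K α) {q : ℕ} {A : ℝ} (hq : 1 ≤ q)
    (hqA : (q : ℝ) ≤ A) : K / A ≤ nint (q * α) := by
  have hA : 0 < A := lt_of_lt_of_le (by exact_mod_cast hq) hqA
  rw [div_le_iff₀ hA, mul_comm]
  exact (hb q hq).trans (mul_le_mul_of_nonneg_right hqA (abs_nonneg _))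

theorem sum_Ico_le (hK : 0 < K) (hb : BadlyApproximableWith K α) {A : ℕ} (hA : 1 ≤ A) :
    ∑ m ∈ Ico A (2 * A), invSqApprox α m ≤ 16 * (∑' n : ℤ, 1 / (n : ℝ) ^ 2) / K ^ 2 := by
  set θ : ℕ → ℝ := fun m => m * α - round (m * α)
  have hA' : (0 : ℝ) < A := by exact_mod_cast hA
  have hfar : ∀ m ∈ Ico A (2 * A), K / A ≤ 2 * |θ m| := by
    intro m hm
    obtain ⟨hAm, hmA⟩ := mem_Ico.1 hm
    have h := hb.div_le_nint (q := m) (A := 2 * A) (by omega) (by exact_mod_cast hmA.le)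
    rw [mul_comm, ← div_div] at h
    change K / A / 2 ≤ |θ m| at h
    linarith
  have hsep : ∀ m ∈ Ico A (2 * A), ∀ n ∈ Ico A (2 * A), m ≠ n → K / A ≤ |θ m - θ n| := by
    suffices ∀ m ∈ Ico A (2 * A), ∀ n ∈ Ico A (2 * A), n < m → K / A ≤ |θ m - θ n| by
      intro m hm n hn hne
      rcases hne.lt_or_gt with h | h
      · rw [abs_sub_comm]; exact this n hn m hm h
      · exact this m hm n hn h
    intro m hm n hn hnm
    obtain ⟨-, hmA⟩ := mem_Ico.1 hm
    obtain ⟨hAn, -⟩ := mem_Ico.1 hn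
    have hmn : m - n ≤ A := by omega
    have h := hb.div_le_nint (q := m - n) (A := A) (by omega) (by exact_mod_cast hmn)
    rw [Nat.cast_sub hnm.le, sub_mul] at h
    exact h.trans (nint_sub_le _ _)
  have hsum := sum_one_div_sq_le_of_separated _ θ (div_pos hK hA') hsep hfar
  have hpt : ∀ m ∈ Ico A (2 * A), invSqApprox α m ≤ 1 / (A : ℝ) ^ 2 * (1 / θ m ^ 2) := by
    intro m hm
    have hθ : 0 < θ m ^ 2 := by
      have hθ' : 0 < |θ m| := by linarith [hfar m hm, div_pos hK hA']
      exact sq_abs (θ m) ▸ pow_pos hθ' 2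
    have hAm : (A : ℝ) ≤ m := by exact_mod_cast (mem_Ico.1 hm).1
    rw [invSqApprox, one_div_mul_one_div]
    change 1 / ((m : ℝ) ^ 2 * |θ m| ^ 2) ≤ _
    rw [sq_abs]
    gcongr
  calc ∑ m ∈ Ico A (2 * A), invSqApprox α m
        ≤ ∑ m ∈ Ico A (2 * A), 1 / (A : ℝ) ^ 2 * (1 / θ m ^ 2) := sum_le_sum hpt
    _ = 1 / (A : ℝ) ^ 2 * ∑ m ∈ Ico A (2 * A), 1 / θ m ^ 2 := (mul_sum ..).symm
    _ ≤ 1 / (A : ℝ) ^ 2 * (16 * (∑' n : ℤ, 1 / (n : ℝ) ^ 2) / (K / A) ^ 2) :=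
        mul_le_mul_of_nonneg_left hsum (by positivity)
    _ = 16 * (∑' n : ℤ, 1 / (n : ℝ) ^ 2) / K ^ 2 := by field_simp


theorem exists_sum_Icc_le_mul_log (hK : 0 < K) (hb : BadlyApproximableWith K α) :
    ∃ C, ∀ M : ℕ, 2 ≤ M → ∑ m ∈ Icc 1 M, invSqApprox α m ≤ C * Real.log M := by
  set B := 16 * (∑' n : ℤ, 1 / (n : ℝ) ^ 2) / K ^ 2
  refine ⟨2 * B / Real.log 2, fun M hM => ?_⟩
  set L := Nat.log 2 M
  have hblock : ∀ j, ∑ m ∈ Ico (2 ^ j) (2 ^ (j + 1)), invSqApprox α m ≤ B := fun j => by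
    rw [pow_succ, mul_comm]
    exact hb.sum_Ico_le hK Nat.one_le_two_pow
  have hsub : Icc 1 M ⊆ Ico 1 (2 ^ (L + 1)) := fun m hm => by
    have : M < 2 ^ (L + 1) := Nat.lt_pow_succ_log_self one_lt_two M
    simp only [mem_Icc, mem_Ico] at hm ⊢
    omega
  have hL : (1 : ℝ) ≤ L := by exact_mod_cast Nat.log_pos one_lt_two hM
  have hLlog : (L : ℝ) ≤ Real.log M / Real.log 2 := Real.natLog_le_logb M 2
  have hB : 0 ≤ B := le_trans (sum_nonneg fun m _ => invSqApprox_nonneg α m) (hblock 0)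
  calc ∑ m ∈ Icc 1 M, invSqApprox α m ≤ ∑ m ∈ Ico 1 (2 ^ (L + 1)), invSqApprox α m :=
        sum_le_sum_of_subset_of_nonneg hsub fun m _ _ => invSqApprox_nonneg α m
    _ ≤ (L + 1 : ℕ) * B := sum_Ico_one_two_pow_le hblock (L + 1)
    _ ≤ 2 * (Real.log M / Real.log 2) * B := by push_cast; gcongr; linarith
    _ = 2 * B / Real.log 2 * Real.log M := by ring

theorem exists_mem_Ioc_one_le_invSqApprox (hK : 0 < K) (hb : BadlyApproximableWith K α)
    {N : ℕ} (hN : 0 < N) : ∃ q : ℕ, K * N < q ∧ q ≤ N ∧ 1 ≤ invSqApprox α q := by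
  obtain ⟨q, hq, hqN, hnint⟩ := Real.exists_nat_abs_mul_sub_round_le α hN
  change nint (q * α) ≤ 1 / (N + 1) at hnint
  have hqN' : (q : ℝ) ≤ N := by exact_mod_cast hqN
  have hprod : (q : ℝ) * nint (q * α) ≤ q / (N + 1) := by
    simpa only [mul_one_div] using mul_le_mul_of_nonneg_left hnint q.cast_nonneg
  have hpos : 0 < (q : ℝ) * nint (q * α) := hK.trans_le (hb q hq)
  refine ⟨q, ?_, hqN, ?_⟩
  · have h := (hb q hq).trans hprod
    rw [le_div_iff₀ (by positivity)] at h
    linarith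
  · have hle : (q : ℝ) * nint (q * α) ≤ 1 :=
      hprod.trans ((div_le_one (by positivity)).2 (by linarith))
    rw [invSqApprox, ← mul_pow]
    exact one_le_one_div (by positivity) (pow_le_one₀ hpos.le hle)

theorem logb_le_sum_Icc (hK : 0 < K) (hb : BadlyApproximableWith K α) {r : ℕ} (hr : 1 < K * r)
    {M : ℕ} (hM : 1 ≤ M) : Real.logb r M ≤ ∑ m ∈ Icc 1 M, invSqApprox α m := by
  have hr0 : 0 < r := Nat.pos_of_ne_zero (by rintro rfl; simp at hr; linarith)
  choose q hq using fun j => hb.exists_mem_Ioc_one_le_invSqApprox hK (pow_pos hr0 j)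
  have hmono : StrictMono q := strictMono_nat_of_lt_succ fun j => by
    have h : (q j : ℝ) < q (j + 1) := calc
      (q j : ℝ) ≤ (r ^ j : ℕ) := by exact_mod_cast (hq j).2.1
      _ < K * (r ^ (j + 1) : ℕ) := by
        push_cast
        rw [pow_succ, mul_comm ((r : ℝ) ^ j), ← mul_assoc]
        exact lt_mul_left (by positivity) hr
      _ < q (j + 1) := (hq (j + 1)).1
    exact_mod_cast h
  have hlogb : Real.logb r M < Nat.log r M + 1 := by
    simpa only [Real.natFloor_logb_natCast] using Nat.lt_floor_add_one (Real.logb r M)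
  set J := Nat.log r M
  have hmaps : ∀ j ∈ range (J + 1), q j ∈ Icc 1 M := fun j hj => by
    have hq1 : (0 : ℝ) < q j := lt_of_le_of_lt (by positivity) (hq j).1
    have hjJ : r ^ j ≤ r ^ J := Nat.pow_le_pow_right hr0 (Nat.lt_succ_iff.1 (mem_range.1 hj))
    have hJM : r ^ J ≤ M := Nat.pow_log_le_self r (by omega)
    exact mem_Icc.2 ⟨by exact_mod_cast hq1, (hq j).2.1.trans (hjJ.trans hJM)⟩
  calc Real.logb r M ≤ (J + 1 : ℕ) := by push_cast; exact hlogb.le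
    _ = ∑ j ∈ range (J + 1), (1 : ℝ) := by simp
    _ ≤ ∑ j ∈ range (J + 1), invSqApprox α (q j) := sum_le_sum fun j _ => (hq j).2.2
    _ = ∑ m ∈ (range (J + 1)).image q, invSqApprox α m :=
        (sum_image fun _ _ _ _ h => hmono.injective h).symm
    _ ≤ ∑ m ∈ Icc 1 M, invSqApprox α m :=
        sum_le_sum_of_subset_of_nonneg (image_subset_iff.2 hmaps) fun m _ _ =>
          invSqApprox_nonneg α m

end BadlyApproximableWith

theorem stmt10_general (α : ℝ)
    (hbad : ∃ K > 0, ∀ q : ℕ, 1 ≤ q → K ≤ (q : ℝ) * nint (q * α)) :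
    ∃ c₁ c₂ : ℝ, 0 < c₁ ∧ c₁ ≤ c₂ ∧ ∀ M : ℕ, 2 ≤ M →
      c₁ * Real.log M ≤ ∑ m ∈ Finset.Icc 1 M, 1 / ((m : ℝ) ^ 2 * nint (m * α) ^ 2) ∧
      ∑ m ∈ Finset.Icc 1 M, 1 / ((m : ℝ) ^ 2 * nint (m * α) ^ 2) ≤ c₂ * Real.log M := by
  obtain ⟨K, hK, hb⟩ := hbad
  obtain ⟨r, hr⟩ := exists_nat_gt (max 1 K⁻¹)
  have hr1 : (1 : ℝ) < r := (le_max_left _ _).trans_lt hr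
  have hKr : 1 < K * r := (inv_lt_iff_one_lt_mul₀' hK).1 ((le_max_right _ _).trans_lt hr)
  obtain ⟨C, hC⟩ := BadlyApproximableWith.exists_sum_Icc_le_mul_log hK hb
  refine ⟨1 / Real.log r, max (1 / Real.log r) C, by have := Real.log_pos hr1; positivity,
    le_max_left _ _, fun M hM => ⟨?_, ?_⟩⟩
  · calc 1 / Real.log r * Real.log M = Real.logb r M := by rw [Real.logb]; ring
      _ ≤ _ := BadlyApproximableWith.logb_le_sum_Icc hK hb hKr (by omega)
  · have hlogM : 0 ≤ Real.log M := Real.log_nonneg (by exact_mod_cast (by omega : 1 ≤ M))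
    exact (hC M hM).trans (mul_le_mul_of_nonneg_right (le_max_right _ _) hlogM)

theorem stmt10 (α : ℝ) (hα : Irrational α)
    (hbad : ∃ K > 0, ∀ q : ℕ, 1 ≤ q → K ≤ (q : ℝ) * nint (q * α)) :
    ∃ c₁ c₂ : ℝ, 0 < c₁ ∧ c₁ ≤ c₂ ∧ ∀ M : ℕ, 2 ≤ M →
      c₁ * Real.log M ≤ ∑ m ∈ Finset.Icc 1 M, 1 / ((m : ℝ) ^ 2 * nint (m * α) ^ 2) ∧
      ∑ m ∈ Finset.Icc 1 M, 1 / ((m : ℝ) ^ 2 * nint (m * α) ^ 2) ≤ c₂ * Real.log M :=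
  stmt10_general α hbad
end

section
/- Let α be a quadratic irrational with continued fraction expansion α = [a₀; a₁, a₂, …] (eventually periodic) and convergent denominators q_k. Then the limit E(α) = lim_{k→∞} (1/(12 log q_k)) ∑_{ℓ=1}^k (-1)^ℓ a_ℓ exists. In particular E((1+√5)/2) = 0. -/
/-!
With `r k = q (k + 1) / q k` one has `r (k + 1) = a (k + 2) + 1 / r k`. Once `a` is `P`-periodic,
the distance `|r (k + P) - r k|` is therefore divided by `r k * r (k + P)` at each step, and since
`r k * r (k + 1) ≥ 2` it shrinks by a factor `4` every two steps. Hence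
`log q (k + P) - log q k = ∑ log r` converges to some `c ≥ log 2`, while for even `P` the
alternating sum `S` has eventually constant increments `S (k + P) - S k = σ`. So `log q k` and
`S k` grow linearly, at rates `c / P` and `σ / P`, and the quotient tends to `σ / (12 c)`. For the
golden ratio `S (k + 2) = S k`, so `σ = 0`.
-/

open Filter Finset Topology

theorem tendsto_of_forall_tendsto_comp_mul_add {α : Type*} {u : ℕ → α} {l : Filter α} {P : ℕ}
    (hP : 0 < P) (h : ∀ r < P, Tendsto (fun n => u (n * P + r)) atTop l) :
    Tendsto u atTop l := by
  intro s hs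
  obtain ⟨N, hN⟩ := eventually_atTop.1 <|
    (eventually_all_finset (range P)).2 fun r hr => h r (mem_range.1 hr) hs
  refine mem_atTop_sets.2 ⟨N * P, fun k hk => ?_⟩
  rw [Set.mem_preimage, ← Nat.div_add_mod' k P]
  exact hN _ ((Nat.le_div_iff_mul_le hP).2 hk) _ (mem_range.2 (Nat.mod_lt _ hP))

theorem tendsto_div_natCast_of_tendsto_sub {u : ℕ → ℝ} {γ : ℝ}
    (h : Tendsto (fun n => u (n + 1) - u n) atTop (𝓝 γ)) :
    Tendsto (fun n => u n / n) atTop (𝓝 γ) := by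
  have hmean : Tendsto (fun n : ℕ => (n : ℝ)⁻¹ * (u n - u 0)) atTop (𝓝 γ) := by
    simpa only [sum_range_sub] using h.cesaro
  simpa using (hmean.add (tendsto_const_div_atTop_nhds_zero_nat (u 0))).congr fun n => by ring

theorem tendsto_div_natCast_of_tendsto_sub_shift {u : ℕ → ℝ} {γ : ℝ} {P : ℕ} (hP : 0 < P)
    (h : Tendsto (fun k => u (k + P) - u k) atTop (𝓝 γ)) :
    Tendsto (fun k => u k / k) atTop (𝓝 (γ / P)) := by
  refine tendsto_of_forall_tendsto_comp_mul_add hP fun r _ => ?_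
  have hres : Tendsto (fun n => u (n * P + r) / n) atTop (𝓝 γ) := by
    refine tendsto_div_natCast_of_tendsto_sub <|
      (h.comp (f := fun n => n * P + r) ?_).congr fun n => ?_
    · exact tendsto_atTop_mono (fun n => Nat.le_add_right_of_le (Nat.le_mul_of_pos_right n hP))
        tendsto_id
    · simp only [Function.comp_apply, add_mul, one_mul, add_right_comm]
  have hlen : Tendsto (fun n : ℕ => ((n * P + r : ℕ) : ℝ) / n) atTop (𝓝 P) := by
    have h := (tendsto_const_div_atTop_nhds_zero_nat (r : ℝ)).const_add (P : ℝ)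
    rw [add_zero] at h
    refine h.congr' ?_
    filter_upwards [eventually_ne_atTop 0] with n hn
    push_cast
    field_simp
  refine (hres.div hlen (by positivity)).congr' ?_
  filter_upwards [eventually_ne_atTop 0] with n hn
  simp only [Pi.div_apply]
  field_simp

theorem tendsto_div_of_tendsto_sub_shift {u v : ℕ → ℝ} {σ c : ℝ} {P : ℕ} (hP : 0 < P)
    (hu : Tendsto (fun k => u (k + P) - u k) atTop (𝓝 σ))
    (hv : Tendsto (fun k => v (k + P) - v k) atTop (𝓝 c)) (hc : c ≠ 0) :
    Tendsto (fun k => u k / v k) atTop (𝓝 (σ / c)) := by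
  have hP' : (P : ℝ) ≠ 0 := by positivity
  have h := (tendsto_div_natCast_of_tendsto_sub_shift hP hu).div
    (tendsto_div_natCast_of_tendsto_sub_shift hP hv) (div_ne_zero hc hP')
  rw [div_div_div_cancel_right₀ hP'] at h
  refine h.congr' ?_
  filter_upwards [eventually_ne_atTop 0] with n hn
  exact div_div_div_cancel_right₀ (Nat.cast_ne_zero.2 hn) _ _

theorem tendsto_sub_shift_of_eventually_periodic_increments {G : Type*} [AddCommGroup G]
    [TopologicalSpace G] {u : ℕ → G} {P K : ℕ}
    (h : ∀ k ≥ K, u (k + P + 1) - u (k + P) = u (k + 1) - u k) :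
    Tendsto (fun k => u (k + P) - u k) atTop (𝓝 (u (K + P) - u K)) := by
  refine tendsto_const_nhds.congr' ?_
  filter_upwards [eventually_ge_atTop K] with k hk
  induction k, hk using Nat.le_induction with
  | base => rfl
  | succ k hk ih =>
    rw [ih, add_right_comm, ← sub_add_sub_cancel (u (k + P + 1)) (u (k + P)), h k hk]
    abel

theorem summable_of_le_mul_two_step {f : ℕ → ℝ} {r : ℝ} (hf : ∀ n, 0 ≤ f n) (hr : r < 1)
    (h : ∀ n, f (n + 2) ≤ r * f n) : Summable f := by
  have key : ∀ m, Summable fun k => f (2 * k + m) := fun m =>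
    summable_of_ratio_norm_eventually_le hr <| Eventually.of_forall fun k => by
      simpa [Real.norm_eq_abs, abs_of_nonneg (hf _), mul_add, add_right_comm] using h (2 * k + m)
  exact .even_add_odd (key 0) (key 1)

theorem abs_log_sub_log_le {u v : ℝ} (hu : 1 ≤ u) (hv : 1 ≤ v) :
    |Real.log u - Real.log v| ≤ |u - v| := by
  wlog h : v ≤ u generalizing u v
  · rw [abs_sub_comm, abs_sub_comm u v]; exact this hv hu (le_of_not_ge h)
  have hv0 : 0 < v := by linarith
  rw [abs_of_nonneg (sub_nonneg.2 (Real.log_le_log hv0 h)), abs_of_nonneg (sub_nonneg.2 h),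
    ← Real.log_div (by positivity) hv0.ne']
  calc Real.log (u / v) ≤ u / v - 1 := Real.log_le_sub_one_of_pos (by positivity)
    _ = (u - v) / v := by field_simp
    _ ≤ u - v := div_le_self (by linarith) hv

structure IsConvergentDenominators (a q : ℕ → ℕ) : Prop where
  q_zero : q 0 = 1
  q_one : q 1 = a 1
  q_add_two : ∀ k, q (k + 2) = a (k + 2) * q (k + 1) + q k
  one_le_a : ∀ k, 1 ≤ a (k + 1)

noncomputable def denomRatio (q : ℕ → ℕ) (k : ℕ) : ℝ := q (k + 1) / q k

namespace IsConvergentDenominators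

variable {a q : ℕ → ℕ}

theorem le_succ (hq : IsConvergentDenominators a q) (k : ℕ) : q k ≤ q (k + 1) := by
  cases k with
  | zero => simpa [hq.q_zero, hq.q_one] using hq.one_le_a 0
  | succ k =>
    rw [hq.q_add_two]
    nlinarith [hq.one_le_a (k + 1)]

theorem monotone (hq : IsConvergentDenominators a q) : Monotone q :=
  monotone_nat_of_le_succ hq.le_succ

theorem pos (hq : IsConvergentDenominators a q) (k : ℕ) : 0 < q k :=
  (hq.q_zero ▸ hq.monotone k.zero_le : 1 ≤ q k)

theorem two_mul_le_add_two (hq : IsConvergentDenominators a q) (k : ℕ) :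
    2 * q k ≤ q (k + 2) := by
  rw [hq.q_add_two]
  nlinarith [hq.one_le_a (k + 1), hq.le_succ k]

theorem one_le_denomRatio (hq : IsConvergentDenominators a q) (k : ℕ) : 1 ≤ denomRatio q k := by
  have h : (0 : ℝ) < q k := by exact_mod_cast hq.pos k
  rw [denomRatio, one_le_div h]
  exact_mod_cast hq.le_succ k

theorem denomRatio_succ (hq : IsConvergentDenominators a q) (k : ℕ) :
    denomRatio q (k + 1) = a (k + 2) + (denomRatio q k)⁻¹ := by
  have h : (q (k + 1) : ℝ) ≠ 0 := by exact_mod_cast (hq.pos _).ne'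
  simp only [denomRatio, hq.q_add_two, inv_div]
  push_cast
  field_simp

theorem two_le_denomRatio_mul_succ (hq : IsConvergentDenominators a q) (k : ℕ) :
    2 ≤ denomRatio q k * denomRatio q (k + 1) := by
  have hr := hq.one_le_denomRatio k
  have ha : (1 : ℝ) ≤ a (k + 2) := by exact_mod_cast hq.one_le_a (k + 1)
  rw [hq.denomRatio_succ, mul_add, mul_inv_cancel₀ (by positivity)]
  nlinarith

theorem log_denomRatio (hq : IsConvergentDenominators a q) (k : ℕ) :
    Real.log (denomRatio q k) = Real.log (q (k + 1)) - Real.log (q k) :=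
  Real.log_div (by exact_mod_cast (hq.pos _).ne') (by exact_mod_cast (hq.pos _).ne')

theorem abs_denomRatio_sub_succ (hq : IsConvergentDenominators a q) {P k : ℕ}
    (hk : a (k + 2 + P) = a (k + 2)) :
    |denomRatio q (k + 1 + P) - denomRatio q (k + 1)| =
      |denomRatio q (k + P) - denomRatio q k| / (denomRatio q k * denomRatio q (k + P)) := by
  have h₁ := hq.one_le_denomRatio k
  have h₂ := hq.one_le_denomRatio (k + P)
  rw [add_right_comm, hq.denomRatio_succ, hq.denomRatio_succ, add_right_comm, hk,
    add_sub_add_left_eq_sub, inv_sub_inv (by positivity) (by positivity), abs_div,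
    abs_of_pos (by positivity : 0 < denomRatio q (k + P) * denomRatio q k), abs_sub_comm, mul_comm]

theorem abs_denomRatio_sub_add_two_le (hq : IsConvergentDenominators a q) {P k : ℕ}
    (hk₂ : a (k + 2 + P) = a (k + 2)) (hk₃ : a (k + 3 + P) = a (k + 3)) :
    |denomRatio q (k + 2 + P) - denomRatio q (k + 2)| ≤
      |denomRatio q (k + P) - denomRatio q k| / 4 := by
  have hprod : 4 ≤ denomRatio q k * denomRatio q (k + P) *
      (denomRatio q (k + 1) * denomRatio q (k + 1 + P)) := by
    have h₁ := hq.two_le_denomRatio_mul_succ k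
    have h₂ := hq.two_le_denomRatio_mul_succ (k + P)
    rw [add_right_comm] at h₂
    nlinarith [hq.one_le_denomRatio k, hq.one_le_denomRatio (k + P)]
  rw [hq.abs_denomRatio_sub_succ (k := k + 1) (by rwa [add_assoc k 1 2]),
    hq.abs_denomRatio_sub_succ hk₂, div_div]
  exact div_le_div_of_nonneg_left (abs_nonneg _) (by norm_num) hprod

theorem summable_abs_denomRatio_sub (hq : IsConvergentDenominators a q) {P K : ℕ}
    (hper : ∀ k ≥ K, a (k + P) = a k) :
    Summable fun k => |denomRatio q (k + P) - denomRatio q k| := by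
  refine (summable_nat_add_iff K).1 <| summable_of_le_mul_two_step (r := 1 / 4)
    (fun _ => abs_nonneg _) (by norm_num) fun n => ?_
  have h := hq.abs_denomRatio_sub_add_two_le (k := n + K) (P := P)
    (hper _ (by omega)) (hper _ (by omega))
  simp only [add_right_comm n K, add_right_comm _ K P] at h ⊢
  linarith

theorem exists_tendsto_log_sub_shift (hq : IsConvergentDenominators a q) {P K : ℕ} (hP : 2 ≤ P)
    (hper : ∀ k ≥ K, a (k + P) = a k) :
    ∃ c, Real.log 2 ≤ c ∧
      Tendsto (fun k => Real.log (q (k + P)) - Real.log (q k)) atTop (𝓝 c) := by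
  have hdist : ∀ k, dist (Real.log (q (k + P)) - Real.log (q k))
      (Real.log (q (k + 1 + P)) - Real.log (q (k + 1))) ≤
      |denomRatio q (k + P) - denomRatio q k| := fun k => by
    rw [Real.dist_eq, add_right_comm, ← abs_neg]
    convert abs_log_sub_log_le (hq.one_le_denomRatio (k + P)) (hq.one_le_denomRatio k) using 2
    rw [hq.log_denomRatio, hq.log_denomRatio]
    ring
  obtain ⟨c, hc⟩ := cauchySeq_tendsto_of_complete <| cauchySeq_of_summable_dist <|
    (hq.summable_abs_denomRatio_sub hper).of_nonneg_of_le (fun _ => dist_nonneg) hdist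
  refine ⟨c, ge_of_tendsto' hc fun k => ?_, hc⟩
  have hq₀ : (0 : ℝ) < q k := by exact_mod_cast hq.pos k
  have h2 : (2 : ℝ) * q k ≤ q (k + P) := by
    exact_mod_cast (hq.two_mul_le_add_two k).trans (hq.monotone (by omega))
  rw [le_sub_iff_add_le, ← Real.log_mul two_ne_zero hq₀.ne']
  exact Real.log_le_log (by positivity) h2

end IsConvergentDenominators

noncomputable def alternatingSum (a : ℕ → ℕ) (k : ℕ) : ℝ :=
  ∑ ℓ ∈ Icc 1 k, (-1 : ℝ) ^ ℓ * a ℓ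

theorem alternatingSum_succ (a : ℕ → ℕ) (k : ℕ) :
    alternatingSum a (k + 1) = alternatingSum a k + (-1) ^ (k + 1) * a (k + 1) :=
  sum_Icc_succ_top (by omega) _

theorem tendsto_alternatingSum_sub_shift {a : ℕ → ℕ} {P K : ℕ} (hP : Even P)
    (hper : ∀ k ≥ K, a (k + P) = a k) :
    Tendsto (fun k => alternatingSum a (k + P) - alternatingSum a k) atTop
      (𝓝 (alternatingSum a (K + P) - alternatingSum a K)) := by
  refine tendsto_sub_shift_of_eventually_periodic_increments fun k hk => ?_
  rw [alternatingSum_succ, alternatingSum_succ, add_right_comm, hper _ (by omega), pow_add,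
    hP.neg_one_pow]
  ring

theorem alternatingSum_of_forall_eq_one {a : ℕ → ℕ} (ha : ∀ ℓ, 1 ≤ ℓ → a ℓ = 1) (k : ℕ) :
    alternatingSum a k = ((-1) ^ k - 1) / 2 := by
  induction k with
  | zero => simp [alternatingSum]
  | succ k ih =>
    rw [alternatingSum_succ, ih, ha _ (by omega)]
    ring

theorem stmt17 (a q : ℕ → ℕ) (h0 : q 0 = 1) (h1 : q 1 = a 1)
    (hrec : ∀ k, 1 ≤ k → q (k + 1) = a (k + 1) * q k + q (k - 1))
    (ha : ∀ k, 1 ≤ k → 1 ≤ a k)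
    (hper : ∃ p : ℕ, 1 ≤ p ∧ ∃ k₀ : ℕ, ∀ k, k₀ ≤ k → a (k + p) = a k) :
    (∃ E : ℝ, Filter.Tendsto (fun k : ℕ => (1 / (12 * Real.log (q k))) *
        ∑ ℓ ∈ Finset.Icc 1 k, (-1 : ℝ) ^ ℓ * (a ℓ : ℝ)) Filter.atTop (nhds E)) ∧
    ((∀ ℓ, 1 ≤ ℓ → a ℓ = 1) → Filter.Tendsto (fun k : ℕ => (1 / (12 * Real.log (q k))) *
        ∑ ℓ ∈ Finset.Icc 1 k, (-1 : ℝ) ^ ℓ * (a ℓ : ℝ)) Filter.atTop (nhds 0)) := by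
  obtain ⟨p, hp, k₀, hper⟩ := hper
  have hq : IsConvergentDenominators a q :=
    ⟨h0, h1, fun k => by simpa using hrec (k + 1) (by omega), fun k => ha (k + 1) (by omega)⟩
  -- the signs `(-1) ^ ℓ` have period 2, so work with the period `2 * p`
  have hper₂ : ∀ k ≥ k₀, a (k + 2 * p) = a k := fun k hk => by
    rw [two_mul, ← add_assoc, hper _ (by omega), hper k hk]
  obtain ⟨c, hc₂, hc⟩ := hq.exists_tendsto_log_sub_shift (by omega) hper₂
  have hc₁₂ : Tendsto (fun k => 12 * Real.log (q (k + 2 * p)) - 12 * Real.log (q k)) atTop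
      (𝓝 (12 * c)) := by
    simpa only [mul_sub] using hc.const_mul 12
  have hc₀ : 12 * c ≠ 0 := (mul_pos (by norm_num) ((Real.log_pos one_lt_two).trans_le hc₂)).ne'
  have hlim : ∀ σ, Tendsto (fun k => alternatingSum a (k + 2 * p) - alternatingSum a k) atTop
      (𝓝 σ) → Tendsto (fun k => 1 / (12 * Real.log (q k)) * alternatingSum a k) atTop
      (𝓝 (σ / (12 * c))) := fun σ hσ => by
    simpa only [one_div_mul_eq_div] using
      tendsto_div_of_tendsto_sub_shift (by omega) hσ hc₁₂ hc₀
  refine ⟨⟨_, hlim _ (tendsto_alternatingSum_sub_shift (even_two_mul p) hper₂)⟩, fun h => ?_⟩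
  rw [← zero_div (12 * c)]
  refine hlim 0 <| tendsto_const_nhds.congr fun k => ?_
  rw [alternatingSum_of_forall_eq_one h, alternatingSum_of_forall_eq_one h, pow_add, pow_mul]
  norm_num
end
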